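/- Let k be a field of characteristic ≠ 2, H = k[t,t⁻¹] the Laurent polynomial Hopf algebra (t grouplike), and B = Λ(V) the exterior algebra on a finite-dimensional vector space V with dim V > 1, viewed as a supercommutative superalgebra with V odd. Let x ∈ Λ²(V) be a nonzero element with x² = 0. Then g : k[t,t⁻¹] → Λ(V), g(t^{±1}) = 1 ± x, is a well-defined algebra map, and the induced map Λ(V) ⊗ k[t,t⁻¹] → Λ(V) ⊗ k[t,t⁻¹], b⊗h ↦ b·(g⊗id)(Δ(h)), is a B-algebra automorphism in right H-supercomodules which is not of the form id_B ⊗ ψ for any Hopf-comodule algebra endomorphism ψ of k[t,t⁻¹]. -/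

import Mathlib

/-!
The twist acts by `b ⊗ tⁿ ↦ b (1 + x)ⁿ ⊗ tⁿ`. As `x` has even degree it is central, so
`(g ⊗ id) ∘ Δ` commutes with `B ⊗ 1` and the twist is the algebra map they jointly induce;
twisting by the convolution inverse `g ∘ S` undoes it, and colinearity only uses that the `tⁿ`
are grouplike. A map `id ⊗ ψ` sends `1 ⊗ t` to `1 ⊗ ψ t`, whereas the twist sends it to
`(1 + x) ⊗ t`, and `1 + x` is not a scalar because `x ≠ 0` has no degree-zero part.
-/

open TensorProduct

noncomputable section

variable (k : Type) [Field k]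

/-- `k[t,t⁻¹]`, as the group algebra of `ℤ`. -/
abbrev Laurent := MonoidAlgebra k (Multiplicative ℤ)

def tGen : Laurent k := MonoidAlgebra.of k (Multiplicative ℤ) (Multiplicative.ofAdd 1)
def tInv : Laurent k := MonoidAlgebra.of k (Multiplicative ℤ) (Multiplicative.ofAdd (-1))

/-- The comultiplication of `k[t,t⁻¹]`, making every `tⁿ` grouplike. -/
def laurentComul : Laurent k →ₗ[k] Laurent k ⊗[k] Laurent k :=
  (Finsupp.lsum k fun g => LinearMap.toSpanSingleton k _
    (MonoidAlgebra.of k (Multiplicative ℤ) g ⊗ₜ MonoidAlgebra.of k (Multiplicative ℤ) g)) ∘ₗ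
    (MonoidAlgebra.coeffLinearEquiv k).toLinearMap

namespace MonoidAlgebra

open LinearMap

variable {R A G : Type*} [CommSemiring R] [Semiring A] [Algebra R A]

def tensorTwist (g : MonoidAlgebra R G →ₗ[R] A) :
    A ⊗[R] MonoidAlgebra R G →ₗ[R] A ⊗[R] MonoidAlgebra R G :=
  rTensor _ (LinearMap.mul' R A ∘ₗ lTensor A g) ∘ₗ
    (TensorProduct.assoc R A (MonoidAlgebra R G) (MonoidAlgebra R G)).symm.toLinearMap ∘ₗ
    lTensor A Coalgebra.comul

@[simp]
lemma tensorTwist_tmul_single (g : MonoidAlgebra R G →ₗ[R] A) (b : A) (a : G) (r : R) :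
    tensorTwist g (b ⊗ₜ single a r) = (b * g (single a 1)) ⊗ₜ single a r := by
  simp [tensorTwist]

lemma lTensor_comul_comp_tensorTwist (g : MonoidAlgebra R G →ₗ[R] A) :
    (TensorProduct.assoc R A (MonoidAlgebra R G) (MonoidAlgebra R G)).symm.toLinearMap ∘ₗ
        lTensor A Coalgebra.comul ∘ₗ tensorTwist g =
      rTensor _ (tensorTwist g) ∘ₗ
        (TensorProduct.assoc R A (MonoidAlgebra R G) (MonoidAlgebra R G)).symm.toLinearMap ∘ₗ
        lTensor A Coalgebra.comul := by
  ext b a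
  simp

lemma tensorTwist_comp_tensorTwist {g g' : MonoidAlgebra R G →ₗ[R] A}
    (h : ∀ a, g' (single a 1) * g (single a 1) = 1) :
    tensorTwist g ∘ₗ tensorTwist g' = LinearMap.id := by
  ext b a
  simp [mul_assoc, h]

section Monoid

variable [Monoid G]

lemma tensorTwist_includeLeft_mul (g : MonoidAlgebra R G →ₗ[R] A) (b : A)
    (z : A ⊗[R] MonoidAlgebra R G) :
    tensorTwist g ((b ⊗ₜ[R] 1 : A ⊗[R] MonoidAlgebra R G) * z) = (b ⊗ₜ 1) * tensorTwist g z := by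
  suffices tensorTwist g ∘ₗ mulLeft R (b ⊗ₜ[R] (1 : MonoidAlgebra R G)) =
      mulLeft R (b ⊗ₜ 1) ∘ₗ tensorTwist g from
    congr($this z)
  ext b' a
  simp [mul_assoc]

variable (g : MonoidAlgebra R G →ₐ[R] A)

lemma tensorTwist_one : tensorTwist g.toLinearMap 1 = 1 := by
  rw [Algebra.TensorProduct.one_def, one_def, tensorTwist_tmul_single, AlgHom.toLinearMap_apply,
    ← one_def, map_one, one_mul]

variable {g} (hg : ∀ a b, Commute (g (of R G a)) b)
include hg

lemma commute_includeLeft_map_comul (b : A) (h : MonoidAlgebra R G) :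
    Commute (Algebra.TensorProduct.includeLeft (S := R) b)
      (Algebra.TensorProduct.map g (AlgHom.id R _) (Bialgebra.comulAlgHom R _ h)) := by
  induction h using MonoidAlgebra.induction_linear with
  | zero => simp
  | add h h' ih ih' => simpa only [map_add] using ih.add_right ih'
  | single a r =>
    rw [← smul_of, map_smul, map_smul]
    refine Commute.smul_right ?_ r
    simpa using (hg a b).symm.tmul (Commute.one_left _)

variable (g) in
def tensorTwistAlgHom : A ⊗[R] MonoidAlgebra R G →ₐ[R] A ⊗[R] MonoidAlgebra R G :=
  Algebra.TensorProduct.lift Algebra.TensorProduct.includeLeft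
    ((Algebra.TensorProduct.map g (AlgHom.id R _)).comp (Bialgebra.comulAlgHom R _))
    fun b h ↦ commute_includeLeft_map_comul hg b h

lemma tensorTwistAlgHom_tmul (b : A) (h : MonoidAlgebra R G) :
    tensorTwistAlgHom g hg (b ⊗ₜ h) =
      (b ⊗ₜ 1) * Algebra.TensorProduct.map g (AlgHom.id R _) (Coalgebra.comul h) :=
  rfl

lemma tensorTwistAlgHom_apply (z : A ⊗[R] MonoidAlgebra R G) :
    tensorTwistAlgHom g hg z = tensorTwist g.toLinearMap z := by
  suffices (tensorTwistAlgHom g hg).toLinearMap = tensorTwist g.toLinearMap from congr($this z)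
  ext b a
  simp [tensorTwistAlgHom_tmul]

lemma tensorTwist_mul (z w : A ⊗[R] MonoidAlgebra R G) :
    tensorTwist g.toLinearMap (z * w) =
      tensorTwist g.toLinearMap z * tensorTwist g.toLinearMap w := by
  simp only [← tensorTwistAlgHom_apply hg, map_mul]

end Monoid

lemma tensorTwist_bijective [Group G] (g : MonoidAlgebra R G →ₐ[R] A) :
    Function.Bijective (tensorTwist g.toLinearMap) := by
  have hinv (a : G) :
      g (single a⁻¹ 1) * g (single a 1) = 1 ∧ g (single a 1) * g (single a⁻¹ 1) = 1 := by
    simp [← map_mul, single_mul_single, ← one_def]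
  refine Function.bijective_iff_has_inverse.2
    ⟨tensorTwist (g.toLinearMap ∘ₗ HopfAlgebra.antipode R), fun z ↦ ?_, fun z ↦ ?_⟩
  · exact congr($(tensorTwist_comp_tensorTwist (by simp [hinv])) z)
  · exact congr($(tensorTwist_comp_tensorTwist (by simp [hinv])) z)

lemma eq_algebraMap_of_tensorTwist_eq_lTensor {R A : Type*} [CommRing R] [Ring A] [Algebra R A]
    {g : MonoidAlgebra R G →ₗ[R] A} {ψ : MonoidAlgebra R G →ₗ[R] MonoidAlgebra R G}
    (h : tensorTwist g = lTensor A ψ) (ε : A →ₗ[R] R) (hε : ε 1 = 1) (a : G) :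
    g (single a 1) = algebraMap R A (ε (g (single a 1))) := by
  let Q : A →ₗ[R] A := LinearMap.id - Algebra.linearMap R A ∘ₗ ε
  let F : A ⊗[R] MonoidAlgebra R G →ₗ[R] A :=
    (TensorProduct.rid R A).toLinearMap ∘ₗ
      TensorProduct.map Q (Finsupp.lapply a ∘ₗ (coeffLinearEquiv R).toLinearMap)
  have := congr(F ($h (1 ⊗ₜ single a 1)))
  simpa [F, Q, hε, sub_eq_zero] using this

end MonoidAlgebra

namespace ExteriorAlgebra

variable {R M : Type*} [CommRing R] [AddCommGroup M] [Module R M]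

lemma commute_of_mem_ι_range_sq {x : ExteriorAlgebra R M} (hx : x ∈ LinearMap.range (ι R) ^ 2)
    (z : ExteriorAlgebra R M) : Commute x z := by
  rw [sq] at hx
  refine Submodule.mul_induction_on hx ?_ fun y w hy hw ↦ hy.add_left hw
  rintro _ ⟨a, rfl⟩ _ ⟨b, rfl⟩
  induction z using ExteriorAlgebra.induction with
  | algebraMap r => exact Algebra.commute_algebraMap_right r _
  | ι m =>
    have anticomm (u : M) : ι R u * ι R m = -(ι R m * ι R u) :=
      eq_neg_of_add_eq_zero_left (ι_add_mul_swap u m)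
    change ι R a * ι R b * ι R m = ι R m * (ι R a * ι R b)
    rw [mul_assoc, anticomm b, mul_neg, ← mul_assoc, anticomm a, neg_mul, neg_neg, mul_assoc]
  | mul z z' hz hz' => exact hz.mul_right hz'
  | add z z' hz hz' => exact hz.add_right hz'

lemma algebraMapInv_eq_zero_of_mem_ι_range_sq {x : ExteriorAlgebra R M}
    (hx : x ∈ LinearMap.range (ι R) ^ 2) : algebraMapInv x = 0 := by
  rw [sq] at hx
  refine Submodule.mul_induction_on hx ?_ fun y w hy hw ↦ by rw [map_add, hy, hw, add_zero]
  rintro _ ⟨a, rfl⟩ _ -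
  simp [algebraMapInv]

end ExteriorAlgebra

lemma laurentComul_eq_comul : laurentComul k = Coalgebra.comul := by
  ext a
  simp [laurentComul]

section Laurent

variable {k} {A : Type*} [Ring A] [Algebra k A]

lemma exists_algHom_tGen_tInv (u : Aˣ) :
    ∃ g : Laurent k →ₐ[k] A, g (tGen k) = u ∧ g (tInv k) = ↑u⁻¹ := by
  refine ⟨MonoidAlgebra.lift k A _ ((Units.coeHom A).comp (zpowersHom Aˣ u)), ?_, ?_⟩ <;>
    simp [tGen, tInv]

lemma commute_of_commute_tGen (g : Laurent k →ₐ[k] A) (hg : ∀ b, Commute (g (tGen k)) b)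
    (a : Multiplicative ℤ) (b : A) : Commute (g (MonoidAlgebra.of k _ a)) b := by
  let χ := (g.toMonoidHom.comp (MonoidAlgebra.of k (Multiplicative ℤ))).toHomUnits
  have : g (MonoidAlgebra.of k _ a) = ↑(χ (Multiplicative.ofAdd 1) ^ a.toAdd) := by
    rw [← map_zpow, ← ofAdd_zsmul, smul_eq_mul, mul_one]
    rfl
  rw [this]
  exact (hg b).units_zpow_left _

end Laurent

theorem laurent_twist_not_induced
    (V : Type) [AddCommGroup V] [Module k V]
    (x : ExteriorAlgebra k V)
    (hx2 : x ∈ (LinearMap.range (ExteriorAlgebra.ι k (M := V))) ^ 2)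
    (hx0 : x ≠ 0) (hxsq : x * x = 0) :
    -- `g(t^{±1}) = 1 ± x` is a well-defined algebra map
    (∃ g : Laurent k →ₐ[k] ExteriorAlgebra k V,
      g (tGen k) = 1 + x ∧ g (tInv k) = 1 - x) ∧
    -- and for any such `g`, the induced endomorphism `b ⊗ h ↦ b·(g ⊗ id)(Δ(h))`
    (∀ g : Laurent k →ₐ[k] ExteriorAlgebra k V,
      g (tGen k) = 1 + x → g (tInv k) = 1 - x →
      ∀ Φ : ExteriorAlgebra k V ⊗[k] Laurent k →ₗ[k]
            ExteriorAlgebra k V ⊗[k] Laurent k,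
      Φ = (LinearMap.rTensor (Laurent k)
            ((LinearMap.mul' k (ExteriorAlgebra k V)) ∘ₗ
              (LinearMap.lTensor (ExteriorAlgebra k V) g.toLinearMap))) ∘ₗ
          (TensorProduct.assoc k (ExteriorAlgebra k V) (Laurent k)
            (Laurent k)).symm.toLinearMap ∘ₗ
          (LinearMap.lTensor (ExteriorAlgebra k V) (laurentComul k)) →
      -- `Φ` is a `B`-algebra automorphism in right `H`-supercomodules:
      (Function.Bijective Φ ∧
        (∀ z w : ExteriorAlgebra k V ⊗[k] Laurent k, Φ (z * w) = Φ z * Φ w) ∧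
        (Φ 1 = 1) ∧
        (∀ (b : ExteriorAlgebra k V) (z : ExteriorAlgebra k V ⊗[k] Laurent k),
          Φ ((b ⊗ₜ 1) * z) = (b ⊗ₜ 1) * Φ z) ∧
        ((TensorProduct.assoc k (ExteriorAlgebra k V) (Laurent k)
            (Laurent k)).symm.toLinearMap ∘ₗ
          (LinearMap.lTensor (ExteriorAlgebra k V) (laurentComul k)) ∘ₗ Φ
          = (LinearMap.rTensor (Laurent k) Φ) ∘ₗ
            (TensorProduct.assoc k (ExteriorAlgebra k V) (Laurent k)
              (Laurent k)).symm.toLinearMap ∘ₗ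
            (LinearMap.lTensor (ExteriorAlgebra k V) (laurentComul k))) ∧
        -- ... which is not of the form `id_B ⊗ ψ`
        ¬ ∃ ψ : Laurent k →ₐ[k] Laurent k,
            ((laurentComul k) ∘ₗ ψ.toLinearMap =
              (LinearMap.rTensor (Laurent k) ψ.toLinearMap) ∘ₗ (laurentComul k)) ∧
            Φ = LinearMap.lTensor (ExteriorAlgebra k V) ψ.toLinearMap)) := by
  have hc : ∀ z, Commute x z := ExteriorAlgebra.commute_of_mem_ι_range_sq hx2
  refine ⟨exists_algHom_tGen_tInv ⟨1 + x, 1 - x, ?_, ?_⟩, ?_⟩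
  · simp [mul_sub, add_mul, hxsq]
  · simp [sub_mul, mul_add, hxsq]
  intro g hg1 _ Φ hΦ
  rw [laurentComul_eq_comul] at hΦ ⊢
  obtain rfl : Φ = MonoidAlgebra.tensorTwist g.toLinearMap := hΦ
  have hg : ∀ a b, Commute (g (MonoidAlgebra.of k _ a)) b :=
    commute_of_commute_tGen g fun b ↦ hg1 ▸ (Commute.one_left b).add_left (hc b)
  refine ⟨MonoidAlgebra.tensorTwist_bijective g, MonoidAlgebra.tensorTwist_mul hg,
    MonoidAlgebra.tensorTwist_one g, MonoidAlgebra.tensorTwist_includeLeft_mul _,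
    MonoidAlgebra.lTensor_comul_comp_tensorTwist _, ?_⟩
  rintro ⟨ψ, -, hψ⟩
  have h := MonoidAlgebra.eq_algebraMap_of_tensorTwist_eq_lTensor hψ
    ExteriorAlgebra.algebraMapInv.toLinearMap (map_one ExteriorAlgebra.algebraMapInv)
    (Multiplicative.ofAdd 1)
  change g (tGen k) = algebraMap k _ (ExteriorAlgebra.algebraMapInv (g (tGen k))) at h
  rw [hg1, map_add, map_one, ExteriorAlgebra.algebraMapInv_eq_zero_of_mem_ι_range_sq hx2,
    add_zero, map_one, add_eq_left] at h
  exact hx0 h
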